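/- arXiv:2511.06975 — 4 statements merged into one kernel-verified Lean document; each statement's English description precedes it below -/
import Mathlib

section
/- For a continuous convex function F : ℝ → ℝ and a lower semicontinuous function I : ℝ → ℝ ∪ {∞} that is not identically ∞, one has sup_{x∈ℝ} (F(x) − I(x)) = sup_{s∈ℝ} (−F*(s) + I*(s)), where F*(s) = sup_x (s·x − F(x)) and I*(s) = sup_x (s·x − I(x)) denote the Legendre–Fenchel transforms (values in the extended reals, with the convention ∞ − ∞ avoided by the stated hypotheses). -/
/-!
Writing `F = F**` turns `sup_x (F x - I x)` into a double supremum over `x` and `s`, whose order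
can be exchanged. Concretely: for every `s`, `-F*(s) + I*(s) ≤ sup_x (F x - I x)` because
`-F*(s) ≤ F x - s x` for all `x`; conversely, at a right-derivative slope `s` of the convex `F`
at `x`, the line of slope `s` through `(x, F x)` supports `F`, so `F*(s) = s x - F x` and the
term `F x - I x` is bounded by `-F*(s) + I*(s)`.
-/

open Set

noncomputable def legendreTransform (f : ℝ → EReal) (s : ℝ) : EReal :=
  ⨆ x, ((s * x : ℝ) : EReal) - f x

theorem ConvexOn.rightDeriv_mul_sub_add_le {S : Set ℝ} {f : ℝ → ℝ} {x y : ℝ}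
    (hf : ConvexOn ℝ S f) (hx : x ∈ interior S) (hy : y ∈ S) :
    derivWithin f (Ioi x) x * (y - x) + f x ≤ f y := by
  rcases lt_trichotomy y x with hyx | rfl | hxy
  · have hslope : slope f y x ≤ derivWithin f (Ioi x) x :=
      (hf.slope_le_leftDeriv_of_mem_interior hy hx hyx).trans
        (hf.leftDeriv_le_rightDeriv_of_mem_interior hx)
    rw [slope_def_field, div_le_iff₀ (sub_pos.2 hyx)] at hslope
    linarith
  · simp
  · have hslope := hf.rightDeriv_le_slope_of_mem_interior hx hy hxy
    rw [slope_def_field, le_div_iff₀ (sub_pos.2 hxy)] at hslope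
    linarith

theorem legendreTransform_coe_eq_of_mul_sub_add_le {F : ℝ → ℝ} {s x : ℝ}
    (hs : ∀ y, s * (y - x) + F x ≤ F y) :
    legendreTransform (fun y ↦ (F y : EReal)) s = ((s * x - F x : ℝ) : EReal) := by
  refine le_antisymm (iSup_le fun y ↦ ?_) (le_iSup_of_le x (EReal.coe_sub _ _).le)
  rw [← EReal.coe_sub, EReal.coe_le_coe_iff]
  linarith [hs y]

theorem EReal.coe_add_iSup_le {ι : Sort*} {c : ℝ} {g : ι → EReal} {T : EReal}
    (h : ∀ i, (c : EReal) + g i ≤ T) : (c : EReal) + ⨆ i, g i ≤ T := by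
  rw [add_comm]
  refine EReal.add_le_of_le_sub (iSup_le fun i ↦ ?_)
  rw [EReal.le_sub_iff_add_le (.inl (EReal.coe_ne_bot c)) (.inl (EReal.coe_ne_top c)), add_comm]
  exact h i

theorem neg_legendreTransform_add_legendreTransform_le (F : ℝ → ℝ) (I : ℝ → EReal) (s : ℝ) :
    -legendreTransform (fun x ↦ (F x : EReal)) s + legendreTransform I s ≤
      ⨆ x, (F x : EReal) - I x := by
  set Fs := legendreTransform (fun x ↦ (F x : EReal)) s
  have hle : ∀ y, ((s * y - F y : ℝ) : EReal) ≤ Fs := fun y ↦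
    (EReal.coe_sub _ _).trans_le (le_iSup (fun y ↦ ((s * y : ℝ) : EReal) - F y) y)
  rcases eq_or_ne Fs ⊤ with htop | htop
  · simp [htop]
  obtain ⟨c, hc⟩ : ∃ c : ℝ, Fs = c :=
    ⟨Fs.toReal, (EReal.coe_toReal htop ((EReal.bot_lt_coe _).trans_le (hle 0)).ne').symm⟩
  rw [hc, ← EReal.coe_neg]
  refine EReal.coe_add_iSup_le fun y ↦ le_iSup_of_le y ?_
  have hcy : -c + s * y ≤ F y := by
    have := hle y
    rw [hc, EReal.coe_le_coe_iff] at this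
    linarith
  calc ((-c : ℝ) : EReal) + (((s * y : ℝ) : EReal) - I y)
      = ((-c + s * y : ℝ) : EReal) - I y := by
        rw [EReal.coe_add, sub_eq_add_neg, sub_eq_add_neg, add_assoc]
    _ ≤ (F y : EReal) - I y := EReal.sub_le_sub (EReal.coe_le_coe_iff.2 hcy) le_rfl

theorem sub_le_neg_legendreTransform_add_legendreTransform {F : ℝ → ℝ} {s x : ℝ}
    (hs : ∀ y, s * (y - x) + F x ≤ F y) (I : ℝ → EReal) :
    (F x : EReal) - I x ≤
      -legendreTransform (fun y ↦ (F y : EReal)) s + legendreTransform I s := by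
  rw [legendreTransform_coe_eq_of_mul_sub_add_le hs, ← EReal.coe_neg]
  calc (F x : EReal) - I x = ((-(s * x - F x) : ℝ) : EReal) + (((s * x : ℝ) : EReal) - I x) := by
        rw [sub_eq_add_neg, sub_eq_add_neg (((s * x : ℝ) : EReal)), ← add_assoc, ← EReal.coe_add,
          neg_sub, sub_add_cancel]
    _ ≤ _ := add_le_add le_rfl (le_iSup (fun y ↦ ((s * y : ℝ) : EReal) - I y) x)

theorem stmt_0_general (F : ℝ → ℝ) (hFconv : ConvexOn ℝ Set.univ F)
    (I : ℝ → EReal) :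
    (⨆ x : ℝ, ((F x : EReal) - I x)) =
      ⨆ s : ℝ, (-(⨆ x : ℝ, ((s * x - F x : ℝ) : EReal)) +
        ⨆ x : ℝ, (((s * x : ℝ) : EReal) - I x)) := by
  simp only [EReal.coe_sub]
  refine le_antisymm (iSup_le fun x ↦ ?_) (iSup_le fun s ↦ ?_)
  · have hs : ∀ y, derivWithin F (Ioi x) x * (y - x) + F x ≤ F y := fun y ↦
      hFconv.rightDeriv_mul_sub_add_le (by simp) (mem_univ y)
    exact le_iSup_of_le _ (sub_le_neg_legendreTransform_add_legendreTransform hs I)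
  · exact neg_legendreTransform_add_legendreTransform_le F I s

/-- Bogoliubov's variational principle, convex case:
`sup_x (F x − I x) = sup_s (−F*(s) + I*(s))` in the extended reals. -/
theorem stmt_0 (F : ℝ → ℝ) (hFc : Continuous F) (hFconv : ConvexOn ℝ Set.univ F)
    (I : ℝ → EReal) (hIlsc : LowerSemicontinuous I) (hIbot : ∀ x, I x ≠ ⊥)
    (hItop : ∃ x, I x ≠ ⊤) :
    (⨆ x : ℝ, ((F x : EReal) - I x)) =
      ⨆ s : ℝ, (-(⨆ x : ℝ, ((s * x - F x : ℝ) : EReal)) +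
        ⨆ x : ℝ, (((s * x : ℝ) : EReal) - I x)) :=
  stmt_0_general F hFconv I
end

section
/- Let u > 0, β > 0 with βu² > 1, and φ(t) = −(β/2)t² + log(cosh(βtu)). Then sup_{t∈ℝ} φ(t) is attained, is strictly positive, and every maximizer t₀ satisfies the self-consistency equation t₀ = u·tanh(βt₀u); moreover the set of maximizers is {t₀, −t₀} for a unique t₀ > 0. -/
/-!
Since `log cosh x ≤ |x|`, the pressure `φ` is bounded by `-(β/2) t² + β u |t|`, so it is negative
for `|t| ≥ 2u` and the continuous function `φ` attains its maximum. Near `0` one has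
`φ t ≈ (β/2) (β u² - 1) t² > 0`, so the maximum is positive and is not attained at `0`. Every
maximizer is a critical point, i.e. solves `t = u tanh (β t u)`; as `tanh x / x` is strictly
decreasing on `(0, ∞)`, this equation has a single positive solution `t₀`, and evenness of `φ`
leaves `{t₀, -t₀}` as the set of maximizers.
-/


open Real Set Filter

namespace Real

theorem hasDerivAt_tanh (x : ℝ) : HasDerivAt tanh (cosh x ^ 2)⁻¹ x := by
  have h := (hasDerivAt_sinh x).div (hasDerivAt_cosh x) (cosh_pos x).ne'
  rw [show tanh = sinh / cosh from funext tanh_eq_sinh_div_cosh]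
  refine h.congr_deriv ?_
  rw [inv_eq_one_div, ← cosh_sq_sub_sinh_sq x]
  ring

theorem one_add_sq_div_two_le_cosh (x : ℝ) : 1 + x ^ 2 / 2 ≤ cosh x := by
  have := sum_le_hasSum (Finset.range 2) (fun n _ => by rw [pow_mul]; positivity) (hasSum_cosh x)
  norm_num [Finset.sum_range_succ] at this
  linarith

theorem log_cosh_le_abs (x : ℝ) : log (cosh x) ≤ |x| := by
  rw [← cosh_abs, log_le_iff_le_exp (cosh_pos _), cosh_eq]
  have : exp (-|x|) ≤ exp |x| := exp_le_exp.2 (by linarith [abs_nonneg x])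
  linarith

theorem strictAntiOn_tanh_div_self : StrictAntiOn (fun x => tanh x / x) (Ioi 0) := by
  have hd : ∀ x ≠ 0, HasDerivAt (fun x => tanh x / x)
      (((cosh x ^ 2)⁻¹ * x - tanh x * 1) / x ^ 2) x :=
    fun x hx => (hasDerivAt_tanh x).div (hasDerivAt_id x) hx
  refine strictAntiOn_of_deriv_neg (convex_Ioi 0)
    (fun x hx => (hd x (ne_of_gt hx)).continuousAt.continuousWithinAt) fun x hx => ?_
  rw [interior_Ioi] at hx
  rw [(hd x hx.ne').deriv]
  have hsinh : x < sinh x * cosh x := by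
    have := self_lt_sinh_iff.2 (by linarith [hx.out] : 0 < 2 * x)
    rw [sinh_two_mul] at this
    linarith
  have hnum : (cosh x ^ 2)⁻¹ * x - tanh x * 1 = (x - sinh x * cosh x) / cosh x ^ 2 := by
    rw [tanh_eq_sinh_div_cosh]
    field_simp [(cosh_pos x).ne']
  have hx0 : 0 < x := hx
  rw [hnum]
  exact div_neg_of_neg_of_pos (div_neg_of_neg_of_pos (by linarith) (by positivity)) (by positivity)

end Real

theorem eq_of_eq_mul_tanh {u β a b : ℝ} (hu : 0 < u) (hβ : 0 < β) (ha : 0 < a) (hb : 0 < b)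
    (hfa : a = u * tanh (β * a * u)) (hfb : b = u * tanh (β * b * u)) : a = b := by
  have slope : ∀ t, 0 < t → t = u * tanh (β * t * u) →
      tanh (β * t * u) / (β * t * u) = (β * u ^ 2)⁻¹ := by
    intro t ht hft
    rw [show tanh (β * t * u) = t / u by field_simp; linarith]
    field_simp
  have := strictAntiOn_tanh_div_self.injOn (mem_Ioi.2 (by positivity)) (mem_Ioi.2 (by positivity))
    ((slope a ha hfa).trans (slope b hb hfb).symm)
  simpa [hβ.ne', hu.ne'] using this

noncomputable def bogoliubovPressure (β u t : ℝ) : ℝ :=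
  -(β / 2) * t ^ 2 + log (cosh (β * t * u))

section

variable {β u : ℝ}

@[simp]
theorem bogoliubovPressure_zero : bogoliubovPressure β u 0 = 0 := by
  simp [bogoliubovPressure]

theorem bogoliubovPressure_neg (t : ℝ) :
    bogoliubovPressure β u (-t) = bogoliubovPressure β u t := by
  rw [bogoliubovPressure, bogoliubovPressure, neg_sq, show β * -t * u = -(β * t * u) by ring,
    cosh_neg]

theorem continuous_bogoliubovPressure : Continuous (bogoliubovPressure β u) :=
  (continuous_const.mul (continuous_pow 2)).add
    ((continuous_cosh.comp (by fun_prop)).log fun _ => (cosh_pos _).ne')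

theorem hasDerivAt_bogoliubovPressure (t : ℝ) :
    HasDerivAt (bogoliubovPressure β u) (-β * t + β * u * tanh (β * t * u)) t := by
  have hlin : HasDerivAt (fun t => β * t * u) (β * u) t := by
    simpa using ((hasDerivAt_id t).const_mul β).mul_const u
  have := ((hasDerivAt_pow 2 t).const_mul (-(β / 2))).add (hlin.cosh.log (cosh_pos _).ne')
  refine this.congr_deriv ?_
  rw [tanh_eq_sinh_div_cosh]
  field_simp
  ring

theorem bogoliubovPressure_nonpos (hβ : 0 ≤ β) {t : ℝ} (ht : 2 * |u| ≤ |t|) :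
    bogoliubovPressure β u t ≤ 0 := by
  have hlog := log_cosh_le_abs (β * t * u)
  rw [abs_mul, abs_mul, abs_of_nonneg hβ] at hlog
  have : β * |t| * |u| ≤ β / 2 * t ^ 2 := by
    rw [← sq_abs t]
    nlinarith [mul_le_mul_of_nonneg_left ht (mul_nonneg hβ (abs_nonneg t))]
  unfold bogoliubovPressure
  linarith

theorem exists_forall_bogoliubovPressure_le (hβ : 0 ≤ β) :
    ∃ t, ∀ s, bogoliubovPressure β u s ≤ bogoliubovPressure β u t := by
  refine continuous_bogoliubovPressure.exists_forall_ge' 0 ?_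
  filter_upwards [tendsto_norm_cocompact_atTop.eventually_ge_atTop (2 * |u|)] with s hs
  simpa using bogoliubovPressure_nonpos hβ hs

theorem exists_bogoliubovPressure_pos (h : 1 < β * u ^ 2) :
    ∃ t, 0 < bogoliubovPressure β u t := by
  obtain ⟨hβ, hu⟩ : β ≠ 0 ∧ u ≠ 0 := mul_ne_zero_iff.1 fun hz => by
    rw [sq, ← mul_assoc, hz, zero_mul] at h
    linarith
  -- at `β t u = x` the pressure is `log cosh x - x² / (2 β u²)`, and `log cosh x ≥ y / (1 + y)`
  -- with `y = x² / 2`; this beats `y / (β u²)` as soon as `y < β u² - 1`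
  set y := (β * u ^ 2 - 1) / 2
  have hy : 0 < y := by simp only [y]; linarith
  set x := √(2 * y)
  have hx : x ^ 2 = 2 * y := sq_sqrt (by positivity)
  refine ⟨x / (β * u), ?_⟩
  have hcosh : 1 + y ≤ cosh x := by
    have := one_add_sq_div_two_le_cosh x
    rwa [hx, mul_div_cancel_left₀ _ two_ne_zero] at this
  have hlog : 1 - (1 + y)⁻¹ ≤ log (cosh x) :=
    (one_sub_inv_le_log_of_pos (by positivity)).trans (log_le_log (by positivity) hcosh)
  have hquad : β / 2 * (x / (β * u)) ^ 2 = y / (β * u ^ 2) := by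
    rw [div_pow, hx]
    field_simp
  have hgap : y / (β * u ^ 2) < 1 - (1 + y)⁻¹ := by
    rw [show β * u ^ 2 = 2 * y + 1 by ring]
    field_simp
    nlinarith
  rw [bogoliubovPressure, show β * (x / (β * u)) * u = x by field_simp]
  linarith

theorem eq_mul_tanh_of_forall_le (hβ : β ≠ 0) {t : ℝ}
    (ht : ∀ s, bogoliubovPressure β u s ≤ bogoliubovPressure β u t) :
    t = u * tanh (β * t * u) := by
  have := (IsLocalMax.hasDerivAt_eq_zero (.of_forall ht) (hasDerivAt_bogoliubovPressure t))
  apply mul_left_cancel₀ hβ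
  linarith

end

theorem setOf_forall_le_eq_pair_of_even {f : ℝ → ℝ} (heven : ∀ t, f (-t) = f t) {t₀ : ℝ}
    (ht₀ : ∀ s, f s ≤ f t₀) (hzero : f 0 < f t₀)
    (huniq : ∀ t, 0 < t → (∀ s, f s ≤ f t) → t = t₀) :
    {t | ∀ s, f s ≤ f t} = {t₀, -t₀} := by
  have max_neg : ∀ t, (∀ s, f s ≤ f t) → ∀ s, f s ≤ f (-t) := fun t ht s => heven t ▸ ht s
  ext t
  refine ⟨fun hmax => ?_, ?_⟩
  · rcases lt_trichotomy t 0 with hneg | rfl | hpos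
    · exact Or.inr (neg_eq_iff_eq_neg.1 (huniq (-t) (neg_pos.2 hneg) (max_neg t hmax)))
    · exact absurd (hmax t₀) hzero.not_ge
    · exact Or.inl (huniq t hpos hmax)
  · rintro (rfl | rfl)
    exacts [ht₀, max_neg _ ht₀]

/-- For `β u² > 1` the supremum of `φ t = −(β/2)t² + log cosh (β t u)` is attained,
strictly positive, maximizers satisfy the self-consistency equation, and the set of
maximizers is `{t₀, −t₀}` for a unique `t₀ > 0`. -/
theorem stmt_7 (u β : ℝ) (hu : 0 < u) (hβ : 0 < β) (h : 1 < β * u ^ 2) :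
    let φ : ℝ → ℝ := fun t => -(β / 2) * t ^ 2 + Real.log (Real.cosh (β * t * u))
    ∃ t₀ : ℝ, 0 < t₀ ∧ 0 < φ t₀ ∧
      {t : ℝ | ∀ s : ℝ, φ s ≤ φ t} = {t₀, -t₀} ∧
      (∀ t : ℝ, (∀ s : ℝ, φ s ≤ φ t) → t = u * Real.tanh (β * t * u)) ∧
      ∀ t₁ : ℝ, 0 < t₁ → {t : ℝ | ∀ s : ℝ, φ s ≤ φ t} = {t₁, -t₁} → t₁ = t₀ := by
  intro φ
  have heven : ∀ t, φ (-t) = φ t := bogoliubovPressure_neg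
  have hφ0 : φ 0 = 0 := bogoliubovPressure_zero
  have hcrit : ∀ t, (∀ s, φ s ≤ φ t) → t = u * tanh (β * t * u) :=
    fun _ => eq_mul_tanh_of_forall_le hβ.ne'
  obtain ⟨t, ht⟩ : ∃ t, ∀ s, φ s ≤ φ t := exists_forall_bogoliubovPressure_le hβ.le
  obtain ⟨s, hs⟩ : ∃ s, 0 < φ s := exists_bogoliubovPressure_pos h
  have ht₀ : ∀ s, φ s ≤ φ |t| := by
    rcases abs_choice t with habs | habs
    · rwa [habs]
    · rwa [habs, heven]
  have hpos : 0 < φ |t| := hs.trans_le (ht₀ s)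
  have ht₀pos : 0 < |t| := abs_pos.2 fun h0 => hpos.ne' (by rw [h0, abs_zero, hφ0])
  have huniq : ∀ t', 0 < t' → (∀ s, φ s ≤ φ t') → t' = |t| := fun t' ht' hmax =>
    eq_of_eq_mul_tanh hu hβ ht' ht₀pos (hcrit t' hmax) (hcrit |t| ht₀)
  have hset := setOf_forall_le_eq_pair_of_even heven ht₀ (by rwa [hφ0]) huniq
  refine ⟨|t|, ht₀pos, hpos, hset, hcrit, fun t₁ ht₁ h₁ => huniq t₁ ht₁ ?_⟩
  exact (h₁ ▸ Or.inl rfl : t₁ ∈ {t' | ∀ s, φ s ≤ φ t'})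
end

section
/- Sion's minimax theorem (one-dimensional real case): Let K ⊆ ℝ be a compact interval, C ⊆ ℝ an interval, and f : K × C → ℝ such that for each y ∈ C, x ↦ f(x,y) is convex and lower semicontinuous on K, and for each x ∈ K, y ↦ f(x,y) is concave and upper semicontinuous on C. Then min_{x∈K} sup_{y∈C} f(x,y) = sup_{y∈C} min_{x∈K} f(x,y). -/
open Set

variable {E F : Type*} {X : Set E} {Y : Set F} {f : E → F → ℝ}

theorem lowerSemicontinuousOn_iSup_coe_ereal [TopologicalSpace E]
    (hfy : ∀ y ∈ Y, LowerSemicontinuousOn (fun x => f x y) X) :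
    LowerSemicontinuousOn (fun x => ⨆ y : Y, (f x y : EReal)) X :=
  lowerSemicontinuousOn_iSup fun y =>
    continuous_coe_real_ereal.comp_lowerSemicontinuousOn (hfy y y.2) EReal.coe_strictMono.monotone

section TopologicalVectorSpace

variable [TopologicalSpace E] [AddCommGroup E] [Module ℝ E] [IsTopologicalAddGroup E]
  [ContinuousSMul ℝ E] [TopologicalSpace F] [AddCommGroup F] [Module ℝ F]
  [IsTopologicalAddGroup F] [ContinuousSMul ℝ F]

theorem Sion.minimax_coe_ereal (ne_X : X.Nonempty) (cX : Convex ℝ X) (kX : IsCompact X)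
    (hfy : ∀ y ∈ Y, LowerSemicontinuousOn (fun x => f x y) X)
    (hfy' : ∀ y ∈ Y, QuasiconvexOn ℝ X fun x => f x y) (cY : Convex ℝ Y)
    (hfx : ∀ x ∈ X, UpperSemicontinuousOn (f x) Y) (hfx' : ∀ x ∈ X, QuasiconcaveOn ℝ Y (f x)) :
    (⨅ x : X, ⨆ y : Y, (f x y : EReal)) = ⨆ y : Y, ⨅ x : X, (f x y : EReal) := by
  have hmono : Monotone Real.toEReal := EReal.coe_strictMono.monotone
  have h := Sion.minimax' (f := fun x y => (f x y : EReal)) ne_X cX kX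
    (fun y hy => continuous_coe_real_ereal.comp_lowerSemicontinuousOn (hfy y hy) hmono)
    (fun y hy => (hfy' y hy).monotone_comp (g := Real.toEReal) hmono) cY
    (fun x hx => continuous_coe_real_ereal.comp_upperSemicontinuousOn (hfx x hx) hmono)
    (fun x hx => (hfx' x hx).monotone_comp (g := Real.toEReal) hmono)
  simpa only [iInf_subtype', iSup_subtype'] using h

end TopologicalVectorSpace

theorem stmt_9_general (a b : ℝ) (hab : a ≤ b) (C : Set ℝ) (hC : Convex ℝ C)
    (f : ℝ → ℝ → ℝ)
    (hconv : ∀ y ∈ C, ConvexOn ℝ (Set.Icc a b) (fun x => f x y))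
    (hlsc : ∀ y ∈ C, LowerSemicontinuousOn (fun x => f x y) (Set.Icc a b))
    (hconc : ∀ x ∈ Set.Icc a b, ConcaveOn ℝ C (f x))
    (husc : ∀ x ∈ Set.Icc a b, UpperSemicontinuousOn (f x) C) :
    (⨅ x : Set.Icc a b, ⨆ y : C, (f x y : EReal)) =
      (⨆ y : C, ⨅ x : Set.Icc a b, (f x y : EReal)) ∧
    ∃ x₀ ∈ Set.Icc a b, (⨆ y : C, (f x₀ y : EReal)) =
      ⨅ x : Set.Icc a b, ⨆ y : C, (f x y : EReal) := by
  have hne : (Icc a b).Nonempty := nonempty_Icc.2 hab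
  obtain ⟨x₀, hx₀, hmin⟩ :=
    (lowerSemicontinuousOn_iSup_coe_ereal hlsc).exists_isMinOn hne isCompact_Icc
  exact ⟨Sion.minimax_coe_ereal hne (convex_Icc a b) isCompact_Icc hlsc
      (fun y hy => (hconv y hy).quasiconvexOn) hC husc (fun x hx => (hconc x hx).quasiconcaveOn),
    x₀, hx₀, (hmin.iInf_eq hx₀).symm⟩

/-- Sion's minimax theorem, one-dimensional real case. -/
theorem stmt_9 (a b : ℝ) (hab : a ≤ b) (C : Set ℝ) (hC : Convex ℝ C)
    (hCne : C.Nonempty) (f : ℝ → ℝ → ℝ)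
    (hconv : ∀ y ∈ C, ConvexOn ℝ (Set.Icc a b) (fun x => f x y))
    (hlsc : ∀ y ∈ C, LowerSemicontinuousOn (fun x => f x y) (Set.Icc a b))
    (hconc : ∀ x ∈ Set.Icc a b, ConcaveOn ℝ C (f x))
    (husc : ∀ x ∈ Set.Icc a b, UpperSemicontinuousOn (f x) C) :
    (⨅ x : Set.Icc a b, ⨆ y : C, (f x y : EReal)) =
      (⨆ y : C, ⨅ x : Set.Icc a b, (f x y : EReal)) ∧
    ∃ x₀ ∈ Set.Icc a b, (⨆ y : C, (f x₀ y : EReal)) =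
      ⨅ x : Set.Icc a b, ⨆ y : C, (f x y : EReal) :=
  stmt_9_general a b hab C hC f hconv hlsc hconc husc
end

section
/- Laplace asymptotics at a nondegenerate interior maximum: Let v : [r,s] → ℝ be C² with a unique maximizer t₀ ∈ (r,s), v′(t₀) = 0, v″(t₀) < 0, and v(t) < v(t₀) for t ≠ t₀. Let ξ : [r,s] → ℝ be continuous with ξ(t₀) ≠ 0. Then ∫_r^s e^{n·v(t)} ξ(t) dt ∼ √(2π/(n·|v″(t₀)|)) · e^{n·v(t₀)} · ξ(t₀) as n → ∞, i.e. the ratio of the two sides tends to 1. -/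
open Set Filter Topology MeasureTheory Asymptotics Real

/-!
Write `v t - v t₀ = -b h² + o(h²)` with `h = t - t₀` and `b = |v''(t₀)| / 2` (second-order
Taylor expansion). Outside a small window `[t₀ - δ, t₀ + δ]` the strict maximum gives
`v - v t₀ ≤ -m < 0`, so those pieces of `√n ∫ e^{n (v - v t₀)} ξ` are `O(√n e^{-n m})`. Inside the
window substitute `h = u / √n`: the integrand becomes `e^{n (v (t₀ + u/√n) - v t₀)} ξ (t₀ + u/√n)`,
which tends to `e^{-b u²} ξ t₀` and, once `δ` is small enough that `v - v t₀ ≤ -(b/2) h²` there,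
is dominated by `C e^{-(b/2) u²}`. Dominated convergence and `∫ e^{-b u²} = √(π / b)` give
`√n ∫_r^s e^{n (v - v t₀)} ξ → √(2π / |v''(t₀)|) ξ t₀`, and the theorem is this limit after
factoring out `e^{n v t₀}`.
-/

theorem isLittleO_taylor_two {f : ℝ → ℝ} {x₀ : ℝ}
    (hf : ∀ᶠ x in 𝓝 x₀, DifferentiableAt ℝ f x) (hf' : DifferentiableAt ℝ (deriv f) x₀) :
    (fun h => f (x₀ + h) - f x₀ - deriv f x₀ * h - deriv (deriv f) x₀ / 2 * h ^ 2) =o[𝓝 0]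
      fun h => h ^ 2 := by
  obtain ⟨ε, hε, hball⟩ := Metric.eventually_nhds_iff_ball.mp hf
  have hnhds : 𝓝[Metric.ball x₀ ε] x₀ = 𝓝 x₀ := nhdsWithin_eq_nhds.mpr (Metric.ball_mem_nhds x₀ hε)
  set c := deriv (deriv f) x₀
  have hderiv : ∀ x ∈ Metric.ball x₀ ε, HasDerivWithinAt
      (fun x => f x - deriv f x₀ * (x - x₀) - c / 2 * (x - x₀) ^ 2)
      (deriv f x - deriv f x₀ - (x - x₀) • c) (Metric.ball x₀ ε) x := by
    intro x hx
    have hlin := (hasDerivAt_id x).sub_const x₀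
    refine (((hball x hx).hasDerivAt.sub (hlin.const_mul _)).sub
      ((hlin.pow 2).const_mul _)).hasDerivWithinAt.congr_deriv ?_
    simp only [id, smul_eq_mul]
    ring
  have hsmall : (fun x => deriv f x - deriv f x₀ - (x - x₀) • c)
      =o[𝓝[Metric.ball x₀ ε] x₀] fun x => (x - x₀) ^ 1 := by
    simpa [hnhds] using hasDerivAt_iff_isLittleO.mp hf'.hasDerivAt
  -- the remainder has derivative `o(x - x₀)`, so by the mean value theorem it is `o((x - x₀)²)`
  have hquad := Convex.isLittleO_pow_succ_real (convex_ball x₀ ε) (Metric.mem_ball_self hε)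
    hderiv hsmall
  rw [hnhds] at hquad
  have htrans : Tendsto (fun h => x₀ + h) (𝓝 0) (𝓝 x₀) := by
    simpa using (continuous_const_add x₀).tendsto 0
  refine (hquad.comp_tendsto htrans).congr (fun h => ?_) (fun h => ?_) <;>
    simp only [Function.comp_apply] <;> ring

theorem tendsto_natCast_mul_comp_div_sqrt {g : ℝ → ℝ} {b : ℝ}
    (hg : (fun h => g h + b * h ^ 2) =o[𝓝 0] fun h => h ^ 2) (u : ℝ) :
    Tendsto (fun n : ℕ => n * g (u / √n)) atTop (𝓝 (-b * u ^ 2)) := by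
  have hsqrt : Tendsto (fun n : ℕ => √n) atTop atTop :=
    tendsto_sqrt_atTop.comp tendsto_natCast_atTop_atTop
  have hsq : ∀ n : ℕ, (u / √n) ^ 2 = u ^ 2 * (n : ℝ)⁻¹ := fun n => by
    rw [div_pow, sq_sqrt n.cast_nonneg, div_eq_mul_inv]
  have hO : (fun n : ℕ => (u / √n) ^ 2) =O[atTop] fun n => (n : ℝ)⁻¹ := by
    simp_rw [hsq]
    exact isBigO_const_mul_self _ _ _
  have hsmall := ((hg.comp_tendsto (tendsto_const_nhds.div_atTop hsqrt)).trans_isBigO hO).mul_isBigO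
    (isBigO_refl (fun n : ℕ => (n : ℝ)) atTop)
  have hone : (fun n : ℕ => (n : ℝ)⁻¹ * n) =ᶠ[atTop] fun _ => (1 : ℝ) := by
    filter_upwards [eventually_ne_atTop 0] with n hn
    exact inv_mul_cancel₀ (Nat.cast_ne_zero.mpr hn)
  have hlim :=
    ((isLittleO_one_iff ℝ).mp (hsmall.congr' EventuallyEq.rfl hone)).sub_const (b * u ^ 2)
  rw [zero_sub, ← neg_mul] at hlim
  refine hlim.congr' ?_
  filter_upwards [eventually_ne_atTop 0] with n hn
  simp only [Function.comp_apply, hsq]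
  field_simp
  ring

theorem tendsto_sqrt_mul_exp_neg_mul {m : ℝ} (hm : 0 < m) :
    Tendsto (fun n : ℕ => √n * exp (-(n * m))) atTop (𝓝 0) := by
  have := (tendsto_rpow_mul_exp_neg_mul_atTop_nhds_zero (1 / 2) m hm).comp
    tendsto_natCast_atTop_atTop
  refine this.congr fun n => ?_
  simp only [Function.comp_apply, sqrt_eq_rpow, neg_mul, mul_comm m]

theorem tendsto_sqrt_mul_intervalIntegral_exp_sub_of_lt {v ξ : ℝ → ℝ} {a b c : ℝ}
    (hv : ContinuousOn v (uIcc a b)) (hξ : ContinuousOn ξ (uIcc a b))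
    (hlt : ∀ t ∈ uIcc a b, v t < c) :
    Tendsto (fun n : ℕ => √n * ∫ t in a..b, exp (n * (v t - c)) * ξ t) atTop (𝓝 0) := by
  obtain ⟨y, hy, hymax⟩ := isCompact_uIcc.exists_isMaxOn nonempty_uIcc hv
  obtain ⟨M, hM⟩ := isCompact_uIcc.exists_bound_of_continuousOn hξ
  have hgap : 0 < c - v y := sub_pos.mpr (hlt y hy)
  have hdecay := (tendsto_sqrt_mul_exp_neg_mul hgap).const_mul (M * |b - a|)
  rw [mul_zero] at hdecay
  refine squeeze_zero_norm (fun n => ?_) hdecay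
  have hpt : ∀ t ∈ uIoc a b, ‖exp (n * (v t - c)) * ξ t‖ ≤ M * exp (-(n * (c - v y))) := by
    intro t ht
    have htab := uIoc_subset_uIcc ht
    have hexp : n * (v t - c) ≤ -(n * (c - v y)) := by
      have hvt : v t ≤ v y := hymax htab
      nlinarith [n.cast_nonneg (α := ℝ)]
    rw [norm_mul, norm_of_nonneg (exp_pos _).le, mul_comm]
    exact mul_le_mul (hM t htab) (exp_le_exp.mpr hexp) (exp_pos _).le
      ((norm_nonneg _).trans (hM t htab))
  calc ‖√n * ∫ t in a..b, exp (n * (v t - c)) * ξ t‖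
      ≤ √n * (M * exp (-(n * (c - v y))) * |b - a|) := by
        rw [norm_mul, norm_of_nonneg (sqrt_nonneg _)]
        exact mul_le_mul_of_nonneg_left (intervalIntegral.norm_integral_le_of_norm_le_const hpt)
          (sqrt_nonneg _)
    _ = M * |b - a| * (√n * exp (-(n * (c - v y)))) := by ring

theorem mul_intervalIntegral_neg_eq_integral_indicator (f : ℝ → ℝ) {a δ : ℝ} (ha : 0 < a)
    (hδ : 0 ≤ δ) :
    a * ∫ h in -δ..δ, f h = ∫ u, (Ioc (-δ * a) (δ * a)).indicator (fun u => f (u / a)) u := by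
  rw [integral_indicator measurableSet_Ioc, ← intervalIntegral.integral_of_le (by nlinarith),
    intervalIntegral.integral_comp_div f ha.ne', smul_eq_mul, mul_div_cancel_right₀ _ ha.ne',
    mul_div_cancel_right₀ _ ha.ne']

theorem div_mem_Icc_of_mem_Ioc {a δ u : ℝ} (ha : 0 < a) (hu : u ∈ Ioc (-δ * a) (δ * a)) :
    u / a ∈ Icc (-δ) δ :=
  ⟨(le_div_iff₀ ha).mpr hu.1.le, (div_le_iff₀ ha).mpr hu.2⟩

/-- The integrand of `√n * ∫ h in -δ..δ, exp (n * g h) * η h` after the substitution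
`h = u / √n`, extended by zero outside the new range of integration. -/
noncomputable def laplaceRescaled (g η : ℝ → ℝ) (δ : ℝ) (n : ℕ) : ℝ → ℝ :=
  (Ioc (-δ * √n) (δ * √n)).indicator fun u => exp (n * g (u / √n)) * η (u / √n)

section laplaceRescaled

variable {g η : ℝ → ℝ} {δ : ℝ} {n : ℕ}

theorem sqrt_mul_intervalIntegral_eq_integral_laplaceRescaled (hn : 0 < n) (hδ : 0 ≤ δ) :
    √n * ∫ h in -δ..δ, exp (n * g h) * η h = ∫ u, laplaceRescaled g η δ n u :=
  mul_intervalIntegral_neg_eq_integral_indicator (fun h => exp (n * g h) * η h)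
    (sqrt_pos.mpr (Nat.cast_pos.mpr hn)) hδ

theorem aestronglyMeasurable_laplaceRescaled (hn : 0 < n) (hgc : ContinuousOn g (Icc (-δ) δ))
    (hη : ContinuousOn η (Icc (-δ) δ)) :
    AEStronglyMeasurable (laplaceRescaled g η δ n) volume := by
  have hmaps : MapsTo (fun u => u / √n) (Ioc (-δ * √n) (δ * √n)) (Icc (-δ) δ) :=
    fun u hu => div_mem_Icc_of_mem_Ioc (sqrt_pos.mpr (Nat.cast_pos.mpr hn)) hu
  have hcont : ContinuousOn (fun u : ℝ => u / √n) (Ioc (-δ * √n) (δ * √n)) :=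
    (continuous_id.div_const _).continuousOn
  refine (aestronglyMeasurable_indicator_iff measurableSet_Ioc).mpr
    (ContinuousOn.aestronglyMeasurable ?_ measurableSet_Ioc)
  exact (continuous_exp.comp_continuousOn
    (continuousOn_const.mul (hgc.comp hcont hmaps))).mul (hη.comp hcont hmaps)

theorem norm_laplaceRescaled_le {c M : ℝ} (hn : 0 < n) (hδ : 0 ≤ δ)
    (hgle : ∀ h ∈ Icc (-δ) δ, g h ≤ -c * h ^ 2) (hM : ∀ h ∈ Icc (-δ) δ, ‖η h‖ ≤ M) (u : ℝ) :
    ‖laplaceRescaled g η δ n u‖ ≤ M * exp (-c * u ^ 2) := by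
  by_cases hu : u ∈ Ioc (-δ * √n) (δ * √n)
  · have hmem := div_mem_Icc_of_mem_Ioc (sqrt_pos.mpr (Nat.cast_pos.mpr hn)) hu
    have hsq : (n : ℝ) * (u / √n) ^ 2 = u ^ 2 := by
      rw [div_pow, sq_sqrt n.cast_nonneg]
      field_simp [(Nat.cast_pos.mpr hn).ne']
    have hexp : n * g (u / √n) ≤ -c * u ^ 2 :=
      calc n * g (u / √n) ≤ n * (-c * (u / √n) ^ 2) :=
            mul_le_mul_of_nonneg_left (hgle _ hmem) n.cast_nonneg
        _ = -c * u ^ 2 := by rw [← hsq]; ring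
    rw [laplaceRescaled, indicator_of_mem hu, norm_mul, norm_of_nonneg (exp_pos _).le, mul_comm]
    exact mul_le_mul (hM _ hmem) (exp_le_exp.mpr hexp) (exp_pos _).le
      ((norm_nonneg _).trans (hM _ hmem))
  · rw [laplaceRescaled, indicator_of_notMem hu, norm_zero]
    exact mul_nonneg ((norm_nonneg _).trans (hM 0 ⟨by linarith, hδ⟩)) (exp_pos _).le

theorem tendsto_laplaceRescaled {b : ℝ} (hδ : 0 < δ)
    (hg : (fun h => g h + b * h ^ 2) =o[𝓝 0] fun h => h ^ 2) (hη : ContinuousAt η 0) (u : ℝ) :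
    Tendsto (fun n => laplaceRescaled g η δ n u) atTop (𝓝 (exp (-b * u ^ 2) * η 0)) := by
  have hsqrt : Tendsto (fun n : ℕ => √n) atTop atTop :=
    tendsto_sqrt_atTop.comp tendsto_natCast_atTop_atTop
  have hmem : ∀ᶠ n : ℕ in atTop, u ∈ Ioc (-δ * √n) (δ * √n) := by
    filter_upwards [(hsqrt.const_mul_atTop hδ).eventually_gt_atTop |u|] with n hn
    exact ⟨by linarith [neg_abs_le u], (le_abs_self u).trans hn.le⟩
  refine (((continuous_exp.tendsto _).comp (tendsto_natCast_mul_comp_div_sqrt hg u)).mul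
    (hη.tendsto.comp ((tendsto_const_nhds (x := u)).div_atTop hsqrt))).congr' ?_
  filter_upwards [hmem] with n hn
  simp only [laplaceRescaled, indicator_of_mem hn, Function.comp_apply]

end laplaceRescaled

theorem tendsto_sqrt_mul_intervalIntegral_exp_mul_of_isLittleO {g η : ℝ → ℝ} {b c δ : ℝ}
    (hδ : 0 < δ) (hc : 0 < c) (hg : (fun h => g h + b * h ^ 2) =o[𝓝 0] fun h => h ^ 2)
    (hgc : ContinuousOn g (Icc (-δ) δ)) (hgle : ∀ h ∈ Icc (-δ) δ, g h ≤ -c * h ^ 2)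
    (hη : ContinuousOn η (Icc (-δ) δ)) :
    Tendsto (fun n : ℕ => √n * ∫ h in -δ..δ, exp (n * g h) * η h) atTop
      (𝓝 (√(π / b) * η 0)) := by
  obtain ⟨M, hM⟩ := isCompact_Icc.exists_bound_of_continuousOn hη
  have hdom := tendsto_integral_filter_of_dominated_convergence _
    ((eventually_gt_atTop 0).mono fun n hn => aestronglyMeasurable_laplaceRescaled hn hgc hη)
    ((eventually_gt_atTop 0).mono fun n hn =>
      ae_of_all _ (norm_laplaceRescaled_le hn hδ.le hgle hM))
    ((integrable_exp_neg_mul_sq hc).const_mul M)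
    (ae_of_all _ (tendsto_laplaceRescaled hδ hg (hη.continuousAt (Icc_mem_nhds (by linarith) hδ))))
  rw [integral_mul_const, integral_gaussian] at hdom
  refine hdom.congr' ((eventually_gt_atTop 0).mono fun n hn => ?_)
  exact (sqrt_mul_intervalIntegral_eq_integral_laplaceRescaled hn hδ.le).symm

theorem tendsto_sqrt_mul_intervalIntegral_exp_sub_of_isLittleO {v ξ : ℝ → ℝ} {r s t₀ b c δ : ℝ}
    (hδ : 0 < δ) (hrδ : r < t₀ - δ) (hδs : t₀ + δ < s) (hc : 0 < c)
    (hv : ContinuousOn v (Icc r s)) (hξ : ContinuousOn ξ (Icc r s))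
    (hmax : ∀ t ∈ Icc r s, t ≠ t₀ → v t < v t₀)
    (hg : (fun h => v (t₀ + h) - v t₀ + b * h ^ 2) =o[𝓝 0] fun h => h ^ 2)
    (hgle : ∀ h ∈ Icc (-δ) δ, v (t₀ + h) - v t₀ ≤ -c * h ^ 2) :
    Tendsto (fun n : ℕ => √n * ∫ t in r..s, exp (n * (v t - v t₀)) * ξ t) atTop
      (𝓝 (√(π / b) * ξ t₀)) := by
  have hlo : t₀ - δ ∈ Icc r s := ⟨hrδ.le, by linarith⟩
  have hhi : t₀ + δ ∈ Icc r s := ⟨by linarith, hδs.le⟩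
  have hr : r ∈ Icc r s := ⟨le_rfl, by linarith⟩
  have hs : s ∈ Icc r s := ⟨by linarith, le_rfl⟩
  have hshift : MapsTo (fun h => t₀ + h) (Icc (-δ) δ) (Icc r s) :=
    fun h hh => ⟨by linarith [hh.1], by linarith [hh.2]⟩
  have hmid := tendsto_sqrt_mul_intervalIntegral_exp_mul_of_isLittleO hδ hc hg
    ((hv.comp (continuous_const_add t₀).continuousOn hshift).sub continuousOn_const) hgle
    (hξ.comp (continuous_const_add t₀).continuousOn hshift)
  have hleft := tendsto_sqrt_mul_intervalIntegral_exp_sub_of_lt (ξ := ξ)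
    (hv.mono (uIcc_subset_Icc hr hlo)) (hξ.mono (uIcc_subset_Icc hr hlo)) fun t ht => by
      rw [uIcc_of_le hrδ.le] at ht
      exact hmax t ⟨ht.1, by linarith [ht.2]⟩ (by linarith [ht.2])
  have hright := tendsto_sqrt_mul_intervalIntegral_exp_sub_of_lt (ξ := ξ)
    (hv.mono (uIcc_subset_Icc hhi hs)) (hξ.mono (uIcc_subset_Icc hhi hs)) fun t ht => by
      rw [uIcc_of_le hδs.le] at ht
      exact hmax t ⟨by linarith [ht.1], ht.2⟩ (by linarith [ht.1])
  have hint : ∀ (n : ℕ) {a a'}, a ∈ Icc r s → a' ∈ Icc r s →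
      IntervalIntegrable (fun t => exp (n * (v t - v t₀)) * ξ t) volume a a' := fun n a a' ha ha' =>
    (((continuous_exp.comp_continuousOn (continuousOn_const.mul
      (hv.sub continuousOn_const))).mul hξ).mono (uIcc_subset_Icc ha ha')).intervalIntegrable
  have hsplit : ∀ n : ℕ, ∫ t in r..s, exp (n * (v t - v t₀)) * ξ t =
      (∫ t in r..t₀ - δ, exp (n * (v t - v t₀)) * ξ t) +
        (∫ h in -δ..δ, exp (n * (v (t₀ + h) - v t₀)) * ξ (t₀ + h)) +
        ∫ t in t₀ + δ..s, exp (n * (v t - v t₀)) * ξ t := fun n => by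
    rw [intervalIntegral.integral_comp_add_left (fun t => exp (n * (v t - v t₀)) * ξ t),
      ← sub_eq_add_neg, intervalIntegral.integral_add_adjacent_intervals (hint n hr hlo)
        (hint n hlo hhi), intervalIntegral.integral_add_adjacent_intervals (hint n hr hhi)
        (hint n hhi hs)]
  have hsum := (hleft.add hmid).add hright
  rw [zero_add, add_zero] at hsum
  simpa [hsplit, mul_add] using hsum

theorem tendsto_sqrt_mul_intervalIntegral_exp_sub_max {v ξ : ℝ → ℝ} {r s t₀ : ℝ}
    (h0 : t₀ ∈ Ioo r s) (hv : ContinuousOn v (Icc r s))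
    (hvd : ∀ᶠ t in 𝓝 t₀, DifferentiableAt ℝ v t) (hv'd : DifferentiableAt ℝ (deriv v) t₀)
    (hv1 : deriv v t₀ = 0) (hv2 : deriv (deriv v) t₀ < 0)
    (hmax : ∀ t ∈ Icc r s, t ≠ t₀ → v t < v t₀) (hξ : ContinuousOn ξ (Icc r s)) :
    Tendsto (fun n : ℕ => √n * ∫ t in r..s, exp (n * (v t - v t₀)) * ξ t) atTop
      (𝓝 (√(2 * π / |deriv (deriv v) t₀|) * ξ t₀)) := by
  set b := |deriv (deriv v) t₀| / 2 with hb_def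
  have hb : 0 < b := half_pos (abs_pos.mpr hv2.ne)
  have hg : (fun h => v (t₀ + h) - v t₀ + b * h ^ 2) =o[𝓝 0] fun h => h ^ 2 := by
    refine (isLittleO_taylor_two hvd hv'd).congr_left fun h => ?_
    rw [hv1, hb_def, abs_of_neg hv2]
    ring
  have htrans : Tendsto (fun h => t₀ + h) (𝓝 0) (𝓝 t₀) := by
    simpa using (continuous_const_add t₀).tendsto 0
  obtain ⟨δ, hδ, hδball⟩ := Metric.nhds_basis_closedBall.eventually_iff.mp
    ((htrans.eventually (isOpen_Ioo.mem_nhds h0)).and (hg.def (half_pos hb)))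
  simp only [closedBall_eq_Icc, zero_sub, zero_add, norm_pow, norm_eq_abs, sq_abs] at hδball
  have hlimit := tendsto_sqrt_mul_intervalIntegral_exp_sub_of_isLittleO hδ
    (by linarith [(hδball ⟨le_rfl, by linarith⟩).1.1]) (hδball ⟨by linarith, le_rfl⟩).1.2
    (half_pos hb) hv hξ hmax hg fun h hh => by linarith [(abs_le.mp (hδball hh).2).2]
  rwa [hb_def, div_div_eq_mul_div, mul_comm π] at hlimit

/-- Laplace asymptotics at a nondegenerate interior maximum. -/
theorem stmt_19 (r s t₀ : ℝ) (h0 : t₀ ∈ Set.Ioo r s)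
    (v ξ : ℝ → ℝ)
    (hv : ContDiffOn ℝ 2 v (Set.Icc r s))
    (hv1 : deriv v t₀ = 0) (hv2 : deriv (deriv v) t₀ < 0)
    (hmax : ∀ t ∈ Set.Icc r s, t ≠ t₀ → v t < v t₀)
    (hξ : ContinuousOn ξ (Set.Icc r s)) (hξ0 : ξ t₀ ≠ 0) :
    Filter.Tendsto (fun n : ℕ =>
      (∫ t in r..s, Real.exp (n * v t) * ξ t) /
        (Real.sqrt (2 * Real.pi / (n * |deriv (deriv v) t₀|)) *
          Real.exp (n * v t₀) * ξ t₀))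
      Filter.atTop (nhds 1) := by
  have hv₀ : ContDiffAt ℝ 2 v t₀ := hv.contDiffAt (Icc_mem_nhds h0.1 h0.2)
  have hlaplace := tendsto_sqrt_mul_intervalIntegral_exp_sub_max h0 hv.continuousOn
    ((hv₀.eventually (by simp)).mono fun t ht => ht.differentiableAt (by simp))
    ((hv₀.derivWithin (m := 1) (by norm_num)).differentiableAt (by simp)) hv1 hv2 hmax hξ
  set A := |deriv (deriv v) t₀|
  have hA : 0 < A := abs_pos.mpr hv2.ne
  have hlim_ne : √(2 * π / A) * ξ t₀ ≠ 0 := mul_ne_zero (sqrt_pos.mpr (by positivity)).ne' hξ0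
  have hratio := hlaplace.div_const (√(2 * π / A) * ξ t₀)
  rw [div_self hlim_ne] at hratio
  refine hratio.congr' ((eventually_gt_atTop 0).mono fun n hn => ?_)
  have hfactor : ∫ t in r..s, exp (n * v t) * ξ t =
      exp (n * v t₀) * ∫ t in r..s, exp (n * (v t - v t₀)) * ξ t := by
    rw [← intervalIntegral.integral_const_mul]
    congr 1 with t
    rw [← mul_assoc, ← exp_add]
    ring_nf
  have hsqrt : √(2 * π / (n * A)) = √(2 * π / A) / √n := by
    rw [← sqrt_div' _ n.cast_nonneg, div_div, mul_comm A]
  simp only [hfactor, hsqrt]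
  field_simp
end
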